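/- If (A,B) is an algebraic Cartan pair, then every conditional expectation P : A → B is implemented by idempotents; in particular (A,B) is an algebraic quasi-Cartan pair. -/

import Mathlib

namespace QCP

variable {R : Type*} [CommRing R] {A : Type*} [NonUnitalRing A]
  [Module R A] [SMulCommClass R A A] [IsScalarTower R A A]

/-- `e` is an idempotent element of the subalgebra `B`, i.e. `e ∈ I(B)`. -/
def IsIdem (B : NonUnitalSubalgebra R A) (e : A) : Prop :=
  e ∈ B ∧ e * e = e

/-- The idempotents of `B` form a set of local units for `A`. -/
def HasLocalUnits (B : NonUnitalSubalgebra R A) : Prop :=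
  ∀ F : Finset A, ∃ e : A, IsIdem B e ∧ ∀ a ∈ F, e * a = a ∧ a * e = a

/-- `k` is a dagger for `n` relative to `B`. -/
def IsDagger (B : NonUnitalSubalgebra R A) (n k : A) : Prop :=
  k * n * k = k ∧ n * k * n = n ∧ ∀ b ∈ B, k * b * n ∈ B ∧ n * b * k ∈ B

/-- `n` belongs to the normaliser `N(B)` of `B` in `A`. -/
def MemNormaliser (B : NonUnitalSubalgebra R A) (n : A) : Prop :=
  ∃ k : A, IsDagger B n k

/-- Condition (WT): `B` is without torsion. -/
def CondWT (B : NonUnitalSubalgebra R A) : Prop :=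
  ∀ e : A, e ∈ B → e * e = e → ∀ t : R, t • e = 0 → t = 0 ∨ e = 0

/-- The partial order on `N(B)`: `m ≤ n` iff `m = n·e` for some `e ∈ I(B)`. -/
def NormLE (B : NonUnitalSubalgebra R A) (m n : A) : Prop :=
  ∃ e : A, IsIdem B e ∧ m = n * e

/-- A filter of `N(B)`. -/
def IsFilterOf (B : NonUnitalSubalgebra R A) (U : Set A) : Prop :=
  (∀ n ∈ U, MemNormaliser B n) ∧ (0 : A) ∉ U ∧
    (∀ m ∈ U, ∀ n : A, MemNormaliser B n → NormLE B m n → n ∈ U) ∧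
    (∀ m ∈ U, ∀ n ∈ U, ∃ p ∈ U, NormLE B p m ∧ NormLE B p n)

/-- An ultrafilter of `N(B)`: a filter maximal among filters under inclusion. -/
def IsUltrafilterOf (B : NonUnitalSubalgebra R A) (U : Set A) : Prop :=
  IsFilterOf B U ∧ ∀ V : Set A, IsFilterOf B V → U ⊆ V → U = V

/-- `P` is a conditional expectation from `A` onto `B`. -/
def IsCondExp (B : NonUnitalSubalgebra R A) (P : A →ₗ[R] A) : Prop :=
  (∀ a : A, P a ∈ B) ∧ (∀ b ∈ B, P b = b) ∧
    (∀ a : A, ∀ b ∈ B, ∀ b' ∈ B, P (b * a * b') = b * P a * b')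

/-- The conditional expectation `P` is faithful. -/
def IsFaithful (B : NonUnitalSubalgebra R A) (P : A →ₗ[R] A) : Prop :=
  ∀ a : A, a ≠ 0 → ∃ n : A, MemNormaliser B n ∧ P (n * a) ≠ 0

/-- The conditional expectation `P` is implemented by idempotents. -/
def ImplementedByIdem (B : NonUnitalSubalgebra R A) (P : A →ₗ[R] A) : Prop :=
  ∀ n : A, MemNormaliser B n → ∃ e : A, IsIdem B e ∧ P n = n * e ∧ P n = e * n

/-- `(A, B)` is an algebraic pair: `B` is commutative, satisfies (WT), `I(B)` is a set of
local units for `A`, `B` is spanned by `I(B)`, `A` is spanned by `N(B)`, and there is a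
faithful conditional expectation `A → B`. -/
def IsAlgebraicPair (B : NonUnitalSubalgebra R A) : Prop :=
  (∀ x ∈ B, ∀ y ∈ B, x * y = y * x) ∧ CondWT B ∧ HasLocalUnits B ∧
    (B : Set A) = (Submodule.span R {e : A | IsIdem B e} : Set A) ∧
    Submodule.span R {n : A | MemNormaliser B n} = ⊤ ∧
    ∃ P : A →ₗ[R] A, IsCondExp B P ∧ IsFaithful B P

/-- A free normaliser: an element of `N(B)` that lies in `B` or squares to zero. -/
def IsFreeNormaliser (B : NonUnitalSubalgebra R A) (n : A) : Prop :=
  MemNormaliser B n ∧ (n ∈ B ∨ n * n = 0)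

/-- `(A, B)` is an algebraic diagonal pair. -/
def IsDiagonalPair (B : NonUnitalSubalgebra R A) : Prop :=
  IsAlgebraicPair B ∧ Submodule.span R {n : A | IsFreeNormaliser B n} = ⊤

/-- `(A, B)` is an algebraic Cartan pair: `B` is a maximal commutative subalgebra. -/
def IsCartanPair (B : NonUnitalSubalgebra R A) : Prop :=
  IsAlgebraicPair B ∧ ∀ a : A, (∀ b ∈ B, a * b = b * a) → a ∈ B

/-- `(A, B)` is an algebraic quasi-Cartan pair. -/
def IsQuasiCartanPair (B : NonUnitalSubalgebra R A) : Prop :=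
  IsAlgebraicPair B ∧
    ∃ P : A →ₗ[R] A, IsCondExp B P ∧ IsFaithful B P ∧ ImplementedByIdem B P

end QCP

/-!
If `k` is a dagger for `n ∈ N(B)`, then `nk, kn ∈ B` and any conditional expectation `P` is
`B`-bilinear, which lets `b ∈ B` be moved past `n` at the cost of conjugating it by `n`:
`P(n)·b = nbk·P(n)`. From this `k·P(n)` commutes with `B`, so it lies in `B` when `B` is
maximal commutative. Then `e₁ = k·P(n)` and `e₂ = n·e₁·k = P(n)·k` are idempotents of `B`
with `P(n) = n·e₁ = e₂·n`, and `e₁·e₂` implements `P` at `n`.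
-/

namespace QCP

variable {R : Type*} [CommRing R] {A : Type*} [NonUnitalRing A] [Module R A]
  {B : NonUnitalSubalgebra R A}

theorem HasLocalUnits.exists_isIdem (hLU : HasLocalUnits B) (a : A) :
    ∃ e : A, IsIdem B e ∧ e * a = a ∧ a * e = a := by
  obtain ⟨e, he, hu⟩ := hLU {a}
  exact ⟨e, he, hu a (Finset.mem_singleton_self a)⟩

theorem IsDagger.symm {n k : A} (h : IsDagger B n k) : IsDagger B k n :=
  ⟨h.2.1, h.1, fun b hb => (h.2.2 b hb).symm⟩

theorem IsDagger.mul_mem (hLU : HasLocalUnits B) {n k : A} (h : IsDagger B n k) :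
    n * k ∈ B := by
  obtain ⟨e, he, hek, -⟩ := hLU.exists_isIdem k
  simpa only [mul_assoc, hek] using (h.2.2 e he.1).2

theorem exists_isIdem_mul_eq_of_commute (hcomm : ∀ x ∈ B, ∀ y ∈ B, x * y = y * x)
    {n x e₁ e₂ : A} (hx : x ∈ B) (he₁ : IsIdem B e₁) (he₂ : IsIdem B e₂)
    (hxe₁ : x = n * e₁) (hxe₂ : x = e₂ * n) : ∃ e : A, IsIdem B e ∧ x = n * e ∧ x = e * n := by
  have hx₁ : x * e₁ = x := by rw [hxe₁, mul_assoc, he₁.2]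
  have hx₂ : e₂ * x = x := by rw [hxe₂, ← mul_assoc, he₂.2]
  refine ⟨e₁ * e₂, ⟨mul_mem he₁.1 he₂.1, ?_⟩, ?_, ?_⟩
  · exact IsIdempotentElem.mul_of_commute (hcomm _ he₁.1 _ he₂.1) he₁.2 he₂.2
  · rw [← mul_assoc, ← hxe₁, hcomm x hx e₂ he₂.1, hx₂]
  · rw [mul_assoc, ← hxe₂, hcomm e₁ he₁.1 x hx, hx₁]

namespace IsCondExp

variable {P : A →ₗ[R] A}

theorem mul_map_eq_of_isIdem (hP : IsCondExp B P) {e a : A} (he : IsIdem B e)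
    (hea : e * a = a) (hae : a * e = a) : e * P a = P a ∧ P a * e = P a := by
  have hPa : e * P a * e = P a := by rw [← hP.2.2 a e he.1 e he.1, hea, hae]
  constructor
  · calc e * P a = e * (e * P a * e) := by rw [hPa]
      _ = e * P a * e := by simp only [← mul_assoc, he.2]
      _ = P a := hPa
  · calc P a * e = e * P a * e * e := by rw [hPa]
      _ = e * P a * e := by simp only [mul_assoc, he.2]
      _ = P a := hPa

theorem map_mul_right (hP : IsCondExp B P) (hLU : HasLocalUnits B) (a : A) {b : A}
    (hb : b ∈ B) : P (a * b) = P a * b := by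
  obtain ⟨e, he, hea, hae⟩ := hLU.exists_isIdem a
  calc P (a * b) = P (e * a * b) := by rw [hea]
    _ = P a * b := by rw [hP.2.2 a e he.1 b hb, (hP.mul_map_eq_of_isIdem he hea hae).1]

theorem map_mul_left (hP : IsCondExp B P) (hLU : HasLocalUnits B) (a : A) {b : A}
    (hb : b ∈ B) : P (b * a) = b * P a := by
  obtain ⟨e, he, hea, hae⟩ := hLU.exists_isIdem a
  calc P (b * a) = P (b * a * e) := by rw [mul_assoc, hae]
    _ = b * P a := by rw [hP.2.2 a b hb e he.1, mul_assoc, (hP.mul_map_eq_of_isIdem he hea hae).2]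

theorem mul_map_dagger_commute (hP : IsCondExp B P) (hLU : HasLocalUnits B)
    (hcomm : ∀ x ∈ B, ∀ y ∈ B, x * y = y * x) {n k : A} (h : IsDagger B n k) {b : A}
    (hb : b ∈ B) : k * P n * b = b * (k * P n) := by
  have hkn : k * n ∈ B := h.symm.mul_mem hLU
  have hnbkn : n * b * k * n = n * b := by
    rw [mul_assoc (n * b), mul_assoc n, hcomm b hb _ hkn, ← mul_assoc n, ← mul_assoc n, h.2.1]
  have hknbk : k * (n * b * k) = b * k := by
    rw [← mul_assoc, ← mul_assoc, hcomm _ hkn b hb, mul_assoc b, h.1]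
  calc k * P n * b = k * P (n * b * k * n) := by
        rw [hnbkn, mul_assoc, hP.map_mul_right hLU n hb]
    _ = b * (k * P n) := by
        rw [hP.map_mul_left hLU n (h.2.2 b hb).2, ← mul_assoc, hknbk, mul_assoc]

theorem implementedByIdem_of_maximal (hP : IsCondExp B P) (hLU : HasLocalUnits B)
    (hcomm : ∀ x ∈ B, ∀ y ∈ B, x * y = y * x)
    (hmax : ∀ a : A, (∀ b ∈ B, a * b = b * a) → a ∈ B) : ImplementedByIdem B P := by
  rintro n ⟨k, h⟩
  have hPn : P (P n) = P n := hP.2.1 _ (hP.1 n)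
  have he₁ : k * P n ∈ B := hmax _ fun b hb => hP.mul_map_dagger_commute hLU hcomm h hb
  have hne₁ : n * (k * P n) = P n := by
    rw [← mul_assoc, ← hP.map_mul_left hLU n (h.mul_mem hLU), h.2.1]
  have hPe₁ : P n * (k * P n) = P n := by rw [← hP.map_mul_right hLU n he₁, hne₁, hPn]
  have he₂n : P n * k * n = P n := by
    rw [mul_assoc, ← hP.map_mul_right hLU n (h.symm.mul_mem hLU), ← mul_assoc, h.2.1]
  have he₂ : P n * k ∈ B := by simpa only [hne₁] using (h.2.2 _ he₁).2
  refine exists_isIdem_mul_eq_of_commute hcomm (hP.1 n) ⟨he₁, ?_⟩ ⟨he₂, ?_⟩ hne₁.symm he₂n.symm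
  · rw [mul_assoc k, hPe₁]
  · rw [← mul_assoc (P n * k), mul_assoc (P n) k, hPe₁]

end IsCondExp

end QCP

theorem cartan_pair_is_quasi_cartan_general {R : Type*} [CommRing R] {A : Type*} [NonUnitalRing A]
    [Module R A]
    (B : NonUnitalSubalgebra R A)
    (hC : QCP.IsCartanPair B) :
    (∀ P : A →ₗ[R] A, QCP.IsCondExp B P → QCP.ImplementedByIdem B P) ∧
      QCP.IsQuasiCartanPair B := by
  obtain ⟨hcomm, -, hLU, -, -, P₀, hP₀, hfaith⟩ := hC.1
  have implemented : ∀ P : A →ₗ[R] A, QCP.IsCondExp B P → QCP.ImplementedByIdem B P :=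
    fun P hP => hP.implementedByIdem_of_maximal hLU hcomm hC.2
  exact ⟨implemented, hC.1, P₀, hP₀, hfaith, implemented P₀ hP₀⟩

/-- for an algebraic Cartan pair, every conditional expectation is
implemented by idempotents; in particular the pair is an algebraic quasi-Cartan pair. -/
theorem cartan_pair_is_quasi_cartan {R : Type*} [CommRing R] {A : Type*} [NonUnitalRing A]
    [Module R A] [SMulCommClass R A A] [IsScalarTower R A A]
    (B : NonUnitalSubalgebra R A)
    (hC : QCP.IsCartanPair B) :
    (∀ P : A →ₗ[R] A, QCP.IsCondExp B P → QCP.ImplementedByIdem B P) ∧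
      QCP.IsQuasiCartanPair B :=
  cartan_pair_is_quasi_cartan_general B hC
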